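/- Let B, W ⊆ ℝ^d be finite nonempty sets and u ∈ ℝ^d. Then Σ_{S ⊆ B} (−1)^{|S|+1} h((S ∪ W)ˇ, u)² = ( h(B,u)² − h(W̌,u)² ) · 1{h(B ⊕ W̌, u) < 0}, where the sum runs over all subsets S of B (for S = ∅ the summand is −h(W̌,u)²). Equivalently, Σ_{S ⊆ B} (−1)^{|S|+1} ( max_{x ∈ S∪W} ⟨−x,u⟩ )² = ( (max_{b∈B}⟨b,u⟩)² − (min_{w∈W}⟨w,u⟩)² ) if max_{b∈B}⟨b,u⟩ < min_{w∈W}⟨w,u⟩, and equals 0 otherwise. -/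

import Mathlib

/-!
With `m = min_{w ∈ W} ⟨w,u⟩` one has `max_{x ∈ S ∪ W} ⟨-x,u⟩ = -min(m, min_S ⟨·,u⟩)`. For an
arbitrary `F`, the alternating sum of `F (min_{S ∪ W} f)` over `S ⊆ B` equals
`F (min(m, max_B f)) - F m`: adding a point `a` to `B` pairs `S` with `insert a S`, which turns
the sum for `insert a B` into the sum for `B` with `F` replaced by `t ↦ F t - F (min(f a, t))`.
Taking `F t = t²`, the right side is `max_B² - m²` when `max_B < m` and `0` otherwise.
-/

namespace Finset

variable {ι α : Type*}

theorem sup'_neg_eq_neg_inf' [AddCommGroup α] [LinearOrder α] [IsOrderedAddMonoid α]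
    (s : Finset ι) (hs : s.Nonempty) (f : ι → α) : s.sup' hs (fun i => -f i) = -s.inf' hs f :=
  eq_of_forall_ge_iff fun c => by simp [neg_le]

variable [DecidableEq ι] [LinearOrder α]

theorem inf'_insert_union (a : ι) (S : Finset ι) {W : Finset ι} (hW : W.Nonempty) (f : ι → α) :
    (insert a S ∪ W).inf' (hW.mono subset_union_right) f =
      f a ⊓ (S ∪ W).inf' (hW.mono subset_union_right) f := by
  simp only [insert_union]
  exact inf'_insert _ _

theorem sum_powerset_neg_one_pow_mul_inf'_union {R : Type*} [Ring R] (F : α → R) (f : ι → α)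
    {W : Finset ι} (hW : W.Nonempty) {B : Finset ι} (hB : B.Nonempty) :
    ∑ S ∈ B.powerset,
        (-1 : R) ^ (S.card + 1) * F ((S ∪ W).inf' (hW.mono subset_union_right) f) =
      F (W.inf' hW f ⊓ B.sup' hB f) - F (W.inf' hW f) := by
  induction hB using Nonempty.cons_induction generalizing F with
  | singleton a =>
    rw [sup'_singleton, ← insert_empty, sum_powerset_insert (notMem_empty a)]
    simp only [powerset_empty, sum_singleton, empty_union, card_empty, insert_empty,
      card_singleton, singleton_union, inf'_insert hW]
    rw [inf_comm]
    noncomm_ring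
  | cons a B ha hB ih =>
    set m := W.inf' hW f
    set M := B.sup' hB f
    rw [sup'_cons hB, cons_eq_insert, sum_powerset_insert ha]
    have hinsert : ∀ S ∈ B.powerset,
        (-1 : R) ^ ((insert a S).card + 1) *
            F ((insert a S ∪ W).inf' (hW.mono subset_union_right) f) =
          -((-1 : R) ^ (S.card + 1) * F (f a ⊓ (S ∪ W).inf' (hW.mono subset_union_right) f)) :=
      fun S hS => by
        rw [card_insert_of_notMem fun haS => ha (mem_powerset.mp hS haS),
          inf'_insert_union a S hW f, pow_succ _ (S.card + 1), mul_neg_one, neg_mul]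
    calc _ = ∑ S ∈ B.powerset, (-1 : R) ^ (S.card + 1) *
          (F ((S ∪ W).inf' (hW.mono subset_union_right) f) -
            F (f a ⊓ (S ∪ W).inf' (hW.mono subset_union_right) f)) := by
          simp only [sum_congr rfl hinsert, sum_neg_distrib, ← sub_eq_add_neg,
            ← sum_sub_distrib, mul_sub]
      _ = F (m ⊓ M) - F (f a ⊓ (m ⊓ M)) - (F m - F (f a ⊓ m)) :=
          ih fun t => F t - F (f a ⊓ t)
      _ = F (m ⊓ (f a ⊔ M)) - F m := by
          rw [← inf_assoc, inf_comm (f a) m, inf_assoc]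
          rcases le_total (f a) M with h | h
          · rw [sup_eq_right.mpr h, inf_eq_left.mpr h]
            abel
          · rw [sup_eq_left.mpr h, inf_eq_right.mpr h]
            abel

end Finset

open Finset

/-- Second-order combinatorial identity for hit-and-miss probabilities:
`∑_{S ⊆ B} (−1)^{|S|+1} h((S ∪ W)ˇ, u)²
  = (h(B,u)² − h(W̌,u)²) · 1{h(B ⊕ W̌, u) < 0}`, i.e. the alternating sum of
`(max_{x∈S∪W} ⟨−x,u⟩)²` equals `(max_{b∈B}⟨b,u⟩)² − (min_{w∈W}⟨w,u⟩)²`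
if `max_{b∈B}⟨b,u⟩ < min_{w∈W}⟨w,u⟩`, and `0` otherwise. -/
theorem hit_and_miss_second_order_identity (d : ℕ)
    [DecidableEq (EuclideanSpace ℝ (Fin d))]
    (B W : Finset (EuclideanSpace ℝ (Fin d))) (hB : B.Nonempty) (hW : W.Nonempty)
    (u : EuclideanSpace ℝ (Fin d)) :
    (∑ S ∈ B.powerset,
        (-1 : ℝ) ^ (S.card + 1) *
          ((S ∪ W).sup' (hW.mono Finset.subset_union_right)
            (fun x => -(inner ℝ x u : ℝ))) ^ 2) =
      if B.sup' hB (fun b => (inner ℝ b u : ℝ)) <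
          W.inf' hW (fun w => (inner ℝ w u : ℝ)) then
        (B.sup' hB (fun b => (inner ℝ b u : ℝ))) ^ 2 -
          (W.inf' hW (fun w => (inner ℝ w u : ℝ))) ^ 2
      else 0 := by
  set g := fun x : EuclideanSpace ℝ (Fin d) => (inner ℝ x u : ℝ)
  have hsq : ∀ S ∈ B.powerset, (-1 : ℝ) ^ (S.card + 1) *
      ((S ∪ W).sup' (hW.mono subset_union_right) (fun x => -g x)) ^ 2 =
        (-1 : ℝ) ^ (S.card + 1) * ((S ∪ W).inf' (hW.mono subset_union_right) g) ^ 2 :=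
    fun S _ => by rw [sup'_neg_eq_neg_inf', neg_sq]
  rw [sum_congr rfl hsq, sum_powerset_neg_one_pow_mul_inf'_union (· ^ 2) g hW hB]
  split_ifs with hMm
  · rw [inf_eq_right.mpr hMm.le]
  · rw [inf_eq_left.mpr (not_lt.mp hMm), sub_self]
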